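/- arXiv:1912.02239 — 3 statements merged into one kernel-verified Lean document; each statement's English description precedes it below -/
import Mathlib

section
/- If a convexity space has restricted k-th Radon number r_k^{(1)} (every set of r_k^{(1)} distinct points can be partitioned into k parts whose convex hulls have a common point), then its multiset k-th Radon number satisfies r_k^{(m)} ≤ (k-1)(r_k^{(1)} - 1) + 1. -/
/-- The convex hull in a convexity space. -/
def convHull {X : Type*} (C : Set (Set X)) (S : Set X) : Set X :=
  ⋂₀ {c | c ∈ C ∧ S ⊆ c}

theorem convHull_mono' {X : Type*} (C : Set (Set X)) {S T : Set X} (h : S ⊆ T) :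
    convHull C S ⊆ convHull C T := by
  intro x hx c hc
  exact hx c ⟨hc.1, h.trans hc.2⟩

theorem mem_convHull' {X : Type*} (C : Set (Set X)) {S : Set X} {a : X} (ha : a ∈ S) :
    a ∈ convHull C S := fun _ hc => hc.2 ha

/-- If the restricted `k`-th Radon number is `r1` (every set of `r1` distinct points admits a
Radon `k`-partition), then every multiset of `(k-1)(r1-1)+1` points admits a Radon
`k`-partition, i.e. `r_k^{(m)} ≤ (k-1)(r_k^{(1)} - 1) + 1`. -/
theorem multiset_radon_le {X : Type*} [DecidableEq X] (C : Set (Set X))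
    (h_empty : ∅ ∈ C) (h_univ : Set.univ ∈ C) (h_inter : ∀ D ⊆ C, ⋂₀ D ∈ C)
    (k r1 : ℕ) (hk : 2 ≤ k)
    (hres : ∀ S : Finset X, S.card = r1 →
      ∃ parts : Fin k → Finset X,
        (∀ i j, i ≠ j → Disjoint (parts i) (parts j)) ∧
        (Finset.univ.biUnion parts = S) ∧
        ∃ x : X, ∀ i, x ∈ convHull C (parts i : Set X)) :
    ∀ P : Multiset X, Multiset.card P = (k - 1) * (r1 - 1) + 1 →
      ∃ parts : Fin k → Multiset X,
        (∑ i, parts i) = P ∧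
        ∃ x : X, ∀ i, x ∈ convHull C {a | a ∈ parts i} := by
  intro P hP
  have hk0 : 0 < k := by omega
  set z : Fin k := ⟨0, hk0⟩ with hz
  by_cases hcard : r1 ≤ P.toFinset.card
  · -- enough distinct points: use the restricted Radon partition
    obtain ⟨S, hS, hScard⟩ := Finset.exists_subset_card_eq hcard
    obtain ⟨parts, hdisj, hunion, x, hx⟩ := hres S hScard
    have hsum : ∑ i, (parts i).val = S.val := by
      have h : S = Finset.univ.disjiUnion parts (show ((Finset.univ : Finset (Fin k)) : Set (Fin k)).PairwiseDisjoint parts from fun i _ j _ hij => hdisj i j hij) := by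
        rw [Finset.disjiUnion_eq_biUnion, hunion]
      rw [h, Finset.disjiUnion_val, Multiset.bind, Multiset.join, Finset.sum_eq_multiset_sum]
    have hSleP : S.val ≤ P := by
      calc S.val ≤ P.toFinset.val := Finset.val_le_iff.mpr hS
        _ ≤ P := Multiset.dedup_le P
    set parts' : Fin k → Multiset X :=
      fun i => if i = z then (P - S.val) + (parts z).val else (parts i).val with hp'
    have hpz : parts' z = (P - S.val) + (parts z).val := if_pos rfl
    have hpi : ∀ i, i ≠ z → parts' i = (parts i).val := fun i hi => if_neg hi
    refine ⟨parts', ?_, x, ?_⟩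
    · rw [← Finset.add_sum_erase _ _ (Finset.mem_univ z), hpz,
        Finset.sum_congr rfl (fun i hi => hpi i (Finset.ne_of_mem_erase hi)),
        add_assoc, Finset.add_sum_erase _ (fun i => (parts i).val) (Finset.mem_univ z),
        hsum, tsub_add_cancel_of_le hSleP]
    · intro i
      by_cases hi : i = z
      · subst hi
        rw [hpz]
        refine convHull_mono' C (S := (parts z : Set X)) ?_ (hx z)
        intro a ha
        simp only [Set.mem_setOf_eq, Multiset.mem_add]
        exact Or.inr ha
      · rw [hpi i hi]
        exact hx i
  · -- few distinct points: some point has multiplicity ≥ k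
    push_neg at hcard
    have hy : ∃ y, k ≤ P.count y := by
      by_contra hcon
      push_neg at hcon
      have hb : Multiset.card P = ∑ a ∈ P.toFinset, P.count a :=
        (Multiset.toFinset_sum_count_eq P).symm
      have hle : ∑ a ∈ P.toFinset, P.count a ≤ P.toFinset.card * (k - 1) := by
        refine (Finset.sum_le_card_nsmul _ _ (k - 1) ?_).trans_eq (by simp [mul_comm])
        intro a _
        have := hcon a
        omega
      have : P.toFinset.card * (k - 1) ≤ (r1 - 1) * (k - 1) :=
        Nat.mul_le_mul_right _ (by omega)
      have hcomm : (r1 - 1) * (k - 1) = (k - 1) * (r1 - 1) := mul_comm _ _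
      omega
    obtain ⟨y, hy⟩ := hy
    have hns : ((k - 1) • ({y} : Multiset X)) ≤ P := by
      rw [Multiset.le_iff_count]
      intro a
      rw [Multiset.count_nsmul, Multiset.count_singleton]
      by_cases ha : a = y
      · subst ha; rw [if_pos rfl, mul_one]; omega
      · simp [ha]
    set parts' : Fin k → Multiset X :=
      fun i => if i = z then P - (k - 1) • ({y} : Multiset X) else {y} with hp'
    have hpz : parts' z = P - (k - 1) • ({y} : Multiset X) := if_pos rfl
    have hpi : ∀ i, i ≠ z → parts' i = {y} := fun i hi => if_neg hi
    refine ⟨parts', ?_, y, ?_⟩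
    · rw [← Finset.add_sum_erase _ _ (Finset.mem_univ z), hpz,
        Finset.sum_congr rfl (fun i hi => hpi i (Finset.ne_of_mem_erase hi)),
        Finset.sum_const]
      have h2 : (Finset.univ.erase z).card = k - 1 := by
        rw [Finset.card_erase_of_mem (Finset.mem_univ z)]
        simp
      rw [h2, tsub_add_cancel_of_le hns]
    · intro i
      refine mem_convHull' C ?_
      by_cases hi : i = z
      · subst hi
        rw [hpz]
        simp only [Set.mem_setOf_eq]
        rw [← Multiset.count_pos, Multiset.count_sub, Multiset.count_nsmul,
          Multiset.count_singleton, if_pos rfl, mul_one]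
        omega
      · rw [hpi i hi]
        simp
end

section
/- For positive integers f, s, t, k with f·s ≤ t·k, if an f-tuple of s-element subsets is chosen uniformly at random from a ground set of size t·k (each subset chosen independently and uniformly among s-element subsets), then the probability that the f subsets are pairwise disjoint is at least (1 - fs/(tk))^{fs} ≥ 1 - (fs)²/(tk). -/
open Finset

lemma card_disjoint_tuples (N s : ℕ) : ∀ f : ℕ,
    Nat.card {F : Fin f → Finset (Fin N) //
      (∀ i, (F i).card = s) ∧ ∀ i j, i ≠ j → Disjoint (F i) (F j)} =
    ∏ i ∈ Finset.range f, (N - i * s).choose s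
  | 0 => by
    haveI : Unique {F : Fin 0 → Finset (Fin N) //
        (∀ i, (F i).card = s) ∧ ∀ i j, i ≠ j → Disjoint (F i) (F j)} :=
      ⟨⟨⟨fun i => i.elim0, fun i => i.elim0, fun i => i.elim0⟩⟩,
        fun F => Subtype.ext (funext fun i => i.elim0)⟩
    simp [Nat.card_unique]
  | f + 1 => by
    classical
    set T := fun m : ℕ => {F : Fin m → Finset (Fin N) //
      (∀ i, (F i).card = s) ∧ ∀ i j, i ≠ j → Disjoint (F i) (F j)} with hT
    have e : T (f + 1) ≃ Σ G : T f, {A : Finset (Fin N) //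
        A.card = s ∧ ∀ i, Disjoint A (G.1 i)} :=
      { toFun := fun F => ⟨⟨fun i => F.1 i.succ, fun i => F.2.1 _,
          fun i j hij => F.2.2 _ _ (fun hc => hij (Fin.succ_injective _ hc))⟩,
          ⟨F.1 0, F.2.1 0, fun i => F.2.2 0 i.succ (Fin.succ_ne_zero i).symm⟩⟩
        invFun := fun P => ⟨Fin.cons P.2.1 P.1.1, by
          constructor
          · intro i
            refine Fin.cases ?_ ?_ i
            · simpa using P.2.2.1
            · intro j; simpa using P.1.2.1 j
          · intro i j
            refine Fin.cases ?_ ?_ i <;> [skip; intro i'] <;>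
              refine Fin.cases ?_ ?_ j
            · intro hij; exact absurd rfl hij
            · intro j' _; simpa using P.2.2.2 j'
            · intro _; simpa using (P.2.2.2 i').symm
            · intro j' hij
              simpa using P.1.2.2 i' j' (fun hc => hij (by rw [hc]))⟩
        left_inv := fun F => Subtype.ext (Fin.cons_self_tail F.1)
        right_inv := fun P => rfl }
    rw [Nat.card_congr e]
    have hfib : ∀ G : T f, Nat.card {A : Finset (Fin N) //
        A.card = s ∧ ∀ i, Disjoint A (G.1 i)} = (N - f * s).choose s := by
      intro G
      set B : Finset (Fin N) := Finset.univ.biUnion G.1 with hB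
      have hBcard : B.card = f * s := by
        rw [hB, Finset.card_biUnion (fun i _ j _ hij => G.2.2 i j hij)]
        simp [G.2.1, mul_comm]
      have e2 : {A : Finset (Fin N) // A.card = s ∧ ∀ i, Disjoint A (G.1 i)} ≃
          {A : Finset (Fin N) // A ∈ Finset.powersetCard s Bᶜ} := by
        apply Equiv.subtypeEquivRight
        intro A
        rw [Finset.mem_powersetCard]
        constructor
        · rintro ⟨h1, h2⟩
          refine ⟨?_, h1⟩
          intro a ha
          simp only [Finset.mem_compl, hB, Finset.mem_biUnion]
          rintro ⟨i, -, hai⟩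
          exact Finset.disjoint_left.mp (h2 i) ha hai
        · rintro ⟨h1, h2⟩
          refine ⟨h2, fun i => ?_⟩
          rw [Finset.disjoint_left]
          intro a ha hai
          have := h1 ha
          simp only [Finset.mem_compl, hB, Finset.mem_biUnion] at this
          exact this ⟨i, Finset.mem_univ i, hai⟩
      rw [Nat.card_congr e2, Nat.card_eq_fintype_card, Fintype.card_coe,
        Finset.card_powersetCard, Finset.card_compl, hBcard]
      simp
    rw [Nat.card_eq_fintype_card, Fintype.card_sigma]
    have : ∀ G : T f, Fintype.card {A : Finset (Fin N) //
        A.card = s ∧ ∀ i, Disjoint A (G.1 i)} = (N - f * s).choose s := by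
      intro G; rw [← Nat.card_eq_fintype_card]; exact hfib G
    simp_rw [this]
    rw [Finset.sum_const, smul_eq_mul, Finset.card_univ, ← Nat.card_eq_fintype_card,
      card_disjoint_tuples N s f, Finset.prod_range_succ]

lemma key_factor (f s n i : ℕ) (hf : 0 < f) (hs : 0 < s) (hn : 0 < n) (h : f * s ≤ n)
    (hi : i < f) :
    (1 - ((f*s:ℕ):ℝ)/((n:ℕ):ℝ)) ^ s * ((n.choose s : ℕ) : ℝ) ≤ (((n - i*s).choose s : ℕ) : ℝ) := by
  have hnR : (0:ℝ) < n := by exact_mod_cast hn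
  have hfact : (0:ℝ) < (s.factorial : ℝ) := by exact_mod_cast s.factorial_pos
  set x : ℝ := 1 - ((f*s:ℕ):ℝ)/((n:ℕ):ℝ) with hx
  have hx0 : 0 ≤ x := by
    rw [hx, sub_nonneg, div_le_one hnR]
    exact_mod_cast h
  have hx1 : x ≤ 1 := by
    rw [hx]
    have : 0 ≤ ((f*s:ℕ):ℝ)/((n:ℕ):ℝ) := by positivity
    linarith
  rw [← mul_le_mul_iff_right₀ hfact]
  have hd1 : (s.factorial : ℝ) * (n.choose s : ℝ) = (n.descFactorial s : ℝ) := by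
    rw [Nat.descFactorial_eq_factorial_mul_choose]; push_cast; ring
  have hd2 : (s.factorial : ℝ) * ((n - i*s).choose s : ℝ) = ((n - i*s).descFactorial s : ℝ) := by
    rw [Nat.descFactorial_eq_factorial_mul_choose]; push_cast; ring
  calc (s.factorial : ℝ) * (x ^ s * (n.choose s : ℝ))
      = x ^ s * (n.descFactorial s : ℝ) := by rw [← hd1]; ring
    _ ≤ ((n - i*s).descFactorial s : ℝ) := ?_
    _ = (s.factorial : ℝ) * ((n - i*s).choose s : ℝ) := hd2.symm
  rw [Nat.descFactorial_eq_prod_range, Nat.descFactorial_eq_prod_range]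
  push_cast [Nat.cast_prod]
  have hrw : x ^ s * ∏ j ∈ range s, ((n - j : ℕ) : ℝ)
      = ∏ j ∈ range s, (x * ((n - j : ℕ) : ℝ)) := by
    rw [Finset.prod_mul_distrib, Finset.prod_const, Finset.card_range]
  rw [hrw]
  apply Finset.prod_le_prod
  · intro j hj
    positivity
  · intro j hj
    rw [Finset.mem_range] at hj
    have hisj : i * s + j + 1 ≤ n := by
      calc i * s + j + 1 ≤ i * s + s := by omega
        _ ≤ f * s := by
          have : i + 1 ≤ f := hi
          calc i * s + s = (i+1) * s := by ring
            _ ≤ f * s := Nat.mul_le_mul_right s this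
        _ ≤ n := h
    have hc1 : ((n - j : ℕ) : ℝ) = (n : ℝ) - j := by
      rw [Nat.cast_sub (by omega)]
    have hc2 : ((n - i * s - j : ℕ) : ℝ) = (n : ℝ) - (i : ℝ) * s - j := by
      rw [Nat.cast_sub (by omega), Nat.cast_sub (by omega)]
      push_cast; ring
    rw [hc1, hc2, hx]
    have hq : ((f*s:ℕ):ℝ)/((n:ℕ):ℝ) * (n:ℝ) = (f:ℝ) * s := by
      field_simp; push_cast; ring
    set q : ℝ := ((f*s:ℕ):ℝ)/((n:ℕ):ℝ) with hqdef
    have hq0 : 0 ≤ q := by positivity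
    have hq1 : q ≤ 1 := by linarith [hx0]
    have hiR : (i:ℝ) + 1 ≤ f := by exact_mod_cast hi
    have hjR : (j:ℝ) + 1 ≤ s := by exact_mod_cast hj
    have hjn : (j:ℝ) ≤ n := by
      have : j ≤ n := by omega
      exact_mod_cast this
    nlinarith [mul_nonneg hq0 (by positivity : (0:ℝ) ≤ (j:ℝ)),
      mul_le_of_le_one_left (by positivity : (0:ℝ) ≤ (j:ℝ)) hq1,
      mul_le_mul_of_nonneg_right hiR (by positivity : (0:ℝ) ≤ (s:ℝ))]


/-- Choosing `f` subsets of size `s` independently and uniformly at random from a ground set of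
size `tk`, the probability that they are pairwise disjoint is at least
`(1 - fs/(tk))^{fs} ≥ 1 - (fs)²/(tk)`. -/
theorem prob_pairwise_disjoint (f s t k : ℕ)
    (hf : 0 < f) (hs : 0 < s) (ht : 0 < t) (hk : 0 < k) (h : f * s ≤ t * k) :
    (1 - ((f * s : ℕ) : ℝ) / ((t * k : ℕ) : ℝ)) ^ (f * s) ≤
      ((Nat.card {F : Fin f → Finset (Fin (t * k)) //
          (∀ i, (F i).card = s) ∧ ∀ i j, i ≠ j → Disjoint (F i) (F j)} : ℝ) /
        (((t * k).choose s : ℝ)) ^ f) ∧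
    1 - ((f * s : ℕ) : ℝ) ^ 2 / ((t * k : ℕ) : ℝ) ≤
      (1 - ((f * s : ℕ) : ℝ) / ((t * k : ℕ) : ℝ)) ^ (f * s) := by
  set n := t * k with hn
  have hn0 : 0 < n := Nat.mul_pos ht hk
  have hnR : (0:ℝ) < (n:ℝ) := by exact_mod_cast hn0
  set x : ℝ := 1 - ((f * s : ℕ) : ℝ) / ((n : ℕ) : ℝ) with hx
  have hsn : s ≤ n := le_trans (Nat.le_mul_of_pos_left s hf) h
  have hx0 : 0 ≤ x := by
    rw [hx, sub_nonneg, div_le_one hnR]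
    exact_mod_cast h
  constructor
  · rw [card_disjoint_tuples]
    have hC : (0:ℝ) < ((n.choose s : ℕ) : ℝ) := by
      exact_mod_cast Nat.choose_pos hsn
    rw [le_div_iff₀ (pow_pos hC f)]
    have hcast : ((∏ i ∈ Finset.range f, (n - i * s).choose s : ℕ) : ℝ)
        = ∏ i ∈ Finset.range f, (((n - i * s).choose s : ℕ) : ℝ) := by
      push_cast; rfl
    rw [hcast]
    have hlhs : x ^ (f * s) * ((n.choose s : ℕ) : ℝ) ^ f
        = ∏ _i ∈ Finset.range f, (x ^ s * ((n.choose s : ℕ) : ℝ)) := by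
      rw [Finset.prod_const, Finset.card_range, mul_pow, ← pow_mul, mul_comm s f]
    rw [hlhs]
    apply Finset.prod_le_prod
    · intro i _; positivity
    · intro i hi
      exact key_factor f s n i hf hs hn0 h (Finset.mem_range.mp hi)
  · have hb := one_add_mul_le_pow (a := -(((f * s : ℕ) : ℝ) / ((n : ℕ) : ℝ)))
      (by nlinarith [div_le_one_of_le₀ (by exact_mod_cast h : ((f*s:ℕ):ℝ) ≤ (n:ℝ)) hnR.le]) (f * s)
    have heq : (1 : ℝ) + (f * s : ℕ) * -(((f * s : ℕ) : ℝ) / ((n : ℕ) : ℝ))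
        = 1 - ((f * s : ℕ) : ℝ) ^ 2 / ((n : ℕ) : ℝ) := by
      push_cast; ring
    rw [heq] at hb
    calc 1 - ((f * s : ℕ) : ℝ) ^ 2 / ((n : ℕ) : ℝ) ≤ _ := hb
      _ = x ^ (f * s) := by rw [hx]; ring_nf
end

section
/- In the convexity space X = {1,...,q}^d with convex sets the axis-parallel affine subgrids, the Radon number r satisfies r ≤ ⌊log₂(d+1)⌋ + 2: any multiset of ⌊log₂(d+1)⌋ + 2 points of {1,...,q}^d can be split into two parts whose convex hulls (smallest axis-parallel subgrids containing them) intersect. -/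
/-- The convex hull in the grid convexity space on `{1,...,q}^d`: coordinatewise, the hull is the
singleton `{a}` in coordinate `i` iff all points of `S` have `i`-th coordinate `a`,
and all of `{1,...,q}` otherwise. -/
def gridHull {d q : ℕ} (S : Set (Fin d → Fin q)) : Set (Fin d → Fin q) :=
  {x | ∀ i a, (∀ y ∈ S, y i = a) → x i = a}

/-- The Radon number of the grid convexity space is at most `⌊log₂(d+1)⌋ + 2`: any multiset of
`⌊log₂(d+1)⌋ + 2` points of `{1,...,q}^d` splits into two nonempty parts with intersecting
hulls. -/
theorem grid_radon {d q : ℕ} (hd : 1 ≤ d) (hq : 2 ≤ q) :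
    ∀ P : Multiset (Fin d → Fin q), Multiset.card P = Nat.log 2 (d + 1) + 2 →
      ∃ P₁ P₂ : Multiset (Fin d → Fin q),
        P₁ ≠ 0 ∧ P₂ ≠ 0 ∧ P₁ + P₂ = P ∧
        (gridHull {x | x ∈ P₁} ∩ gridHull {x | x ∈ P₂}).Nonempty := by
  classical
  intro P hP
  obtain ⟨L, rfl⟩ : ∃ L : List (Fin d → Fin q), (↑L : Multiset _) = P :=
    ⟨P.toList, P.coe_toList⟩
  rw [Multiset.coe_card] at hP
  have hlen : 0 < L.length := by omega
  set g : Fin L.length → (Fin d → Fin q) := L.get with hg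
  set j0 : Fin L.length := ⟨0, hlen⟩ with hj0
  set G : Bool × Option (Fin d) → (Fin L.length → Bool) := fun p j =>
    match p.2 with
    | none => p.1
    | some i => (p.1 == decide (g j i = g j0 i)) with hG
  have hcard : Fintype.card (Bool × Option (Fin d)) < Fintype.card (Fin L.length → Bool) := by
    have hlt := Nat.lt_pow_succ_log_self (by norm_num : 1 < 2) (d + 1)
    rw [Fintype.card_prod, Fintype.card_option, Fintype.card_fun, Fintype.card_bool,
      Fintype.card_fin, Fintype.card_fin, hP]
    have : 2 ^ (Nat.log 2 (d + 1) + 2) = 2 ^ (Nat.log 2 (d + 1) + 1) * 2 := by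
      rw [← pow_succ]
    omega
  obtain ⟨s, hs⟩ : ∃ s, ∀ p, G p ≠ s := by
    by_contra h
    push_neg at h
    exact absurd (Fintype.card_le_of_surjective G h) (Nat.not_le.mpr hcard)
  have hconst : ∀ b : Bool, ∃ j, s j ≠ b := by
    intro b
    by_contra h
    push_neg at h
    exact hs (b, none) (funext fun j => (h j).symm)
  obtain ⟨j1, hj1⟩ := hconst false
  obtain ⟨j2, hj2⟩ := hconst true
  rw [Bool.ne_false_iff] at hj1
  replace hj2 : s j2 = false := by simpa using hj2
  have hnotbad : ∀ i : Fin d, ¬ ∃ a b : Fin q, a ≠ b ∧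
      (∀ j, s j = true → g j i = a) ∧ (∀ j, s j = false → g j i = b) := by
    rintro i ⟨a, b, hab, h1, h0⟩
    apply hs (s j0, some i)
    funext j
    show (s j0 == decide (g j i = g j0 i)) = s j
    cases hs0 : s j0 with
    | true =>
      have ha0 : g j0 i = a := h1 j0 hs0
      cases hsj : s j with
      | true => simp [h1 j hsj, ha0]
      | false => simp [h0 j hsj, ha0, Ne.symm hab]
    | false =>
      have hb0 : g j0 i = b := h0 j0 hs0
      cases hsj : s j with
      | true => simp [h1 j hsj, hb0, hab]
      | false => simp [h0 j hsj, hb0]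
  set M : Multiset (Fin L.length) := ↑(List.finRange L.length) with hM
  set P₁ := Multiset.map g (Multiset.filter (fun j => s j = true) M) with hP₁
  set P₂ := Multiset.map g (Multiset.filter (fun j => ¬ s j = true) M) with hP₂
  have hmem1 : ∀ j, s j = true → g j ∈ P₁ := fun j hj =>
    Multiset.mem_map.mpr ⟨j, Multiset.mem_filter.mpr
      ⟨Multiset.mem_coe.mpr (List.mem_finRange j), hj⟩, rfl⟩
  have hmem2 : ∀ j, s j = false → g j ∈ P₂ := fun j hj =>
    Multiset.mem_map.mpr ⟨j, Multiset.mem_filter.mpr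
      ⟨Multiset.mem_coe.mpr (List.mem_finRange j), by simp [hj]⟩, rfl⟩
  refine ⟨P₁, P₂, ?_, ?_, ?_, ?_⟩
  · intro h
    exact absurd (h ▸ hmem1 j1 hj1) (Multiset.notMem_zero _)
  · intro h
    exact absurd (h ▸ hmem2 j2 hj2) (Multiset.notMem_zero _)
  · rw [hP₁, hP₂, ← Multiset.map_add, Multiset.filter_add_not, hM, Multiset.map_coe,
      List.map_get_finRange]
  · set x : Fin d → Fin q :=
      fun i => if (∀ j, s j = true → g j i = g j1 i) then g j1 i else g j2 i with hx
    refine ⟨x, ?_, ?_⟩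
    · intro i a h
      have hj1a : g j1 i = a := h (g j1) (hmem1 j1 hj1)
      have hcond : ∀ j, s j = true → g j i = g j1 i := fun j hj =>
        (h (g j) (hmem1 j hj)).trans hj1a.symm
      show x i = a
      rw [hx]
      simp only [if_pos hcond]
      exact hj1a
    · intro i a h
      have hj2a : g j2 i = a := h (g j2) (hmem2 j2 hj2)
      by_cases hcond : ∀ j, s j = true → g j i = g j1 i
      · have h0 : ∀ j, s j = false → g j i = g j2 i := fun j hj =>
          (h (g j) (hmem2 j hj)).trans hj2a.symm
        have heq : g j1 i = g j2 i := by
          by_contra hne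
          exact hnotbad i ⟨g j1 i, g j2 i, hne, hcond, h0⟩
        show x i = a
        rw [hx]
        simp only [if_pos hcond]
        rw [heq, hj2a]
      · show x i = a
        rw [hx]
        simp only [if_neg hcond]
        exact hj2a
end
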